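/- arXiv:2107.01022 — 4 statements merged into one kernel-verified Lean document; each statement's English description precedes it below -/
import Mathlib

section
/- Let $p$ be a felt metric for a nonempty set $X$ and let $f : X \to X$ be a selfmapping. Suppose that $f$ satisfies condition (3): for each $\alpha > 0$ there exists an $\epsilon > 0$ such that for all $x, y \in X$, $\alpha \le p(y,x) < \alpha + \epsilon$ implies $p(fy,fx) \le \alpha$. Fix $x_0 \in X$, let $x_n = f^n x_0$ for all $n \in \mathbb{N}$, and assume $\lim_{n\to\infty} p(x_{n+1}, x_n) = 0$. If $(X,p)$ is $0$-complete, then there exists an $x \in X$ such that $\lim_{n\to\infty} p(x_n, x) = 0$, $p(x,x) = 0$, and $fx = x$. -/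
open Filter Topology

/-- For a felt metric `p` on a nonempty set `X` and a selfmap `f`
satisfying condition (3), if the iterates `x_n = f^[n] x_0` satisfy
`p (x_{n+1}, x_n) → 0` and `(X, p)` is `0`-complete, then there is `x ∈ X` with
`p (x_n, x) → 0`, `p x x = 0` and `f x = x`. -/
theorem felt_metric_fixed_point_cond3
    {X : Type*} [Nonempty X] (p : X → X → ℝ) (f : X → X)
    (hnonneg : ∀ x y : X, 0 ≤ p x y)
    (h1a : ∀ x y : X, p x y = 0 → x = y)
    (h1b : ∀ x y : X, p x y = p y x)
    (h1c : ∀ ε : ℝ, ε > 0 → ∃ δ : ℝ, δ > 0 ∧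
      ∀ x y z : X, p z y < δ → |p z x - p y x| < ε)
    (h3 : ∀ α : ℝ, α > 0 → ∃ ε : ℝ, ε > 0 ∧
      ∀ x y : X, α ≤ p y x → p y x < α + ε → p (f y) (f x) ≤ α)
    (x₀ : X)
    (hseq : Tendsto (fun n : ℕ => p (f^[n + 1] x₀) (f^[n] x₀)) atTop (𝓝 0))
    (hcomplete : ∀ u : ℕ → X,
      Tendsto (fun q : ℕ × ℕ => p (u q.1) (u q.2)) atTop (𝓝 0) →
      ∃ x : X, Tendsto (fun n : ℕ => p (u n) x) atTop (𝓝 0)) :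
    ∃ x : X, Tendsto (fun n : ℕ => p (f^[n] x₀) x) atTop (𝓝 0) ∧
      p x x = 0 ∧ f x = x := by
  set x : ℕ → X := fun n => f^[n] x₀ with hxd
  have hxs : ∀ n : ℕ, x (n + 1) = f (x n) := fun n => Function.iterate_succ_apply' f n x₀
  have hseq' : Tendsto (fun n : ℕ => p (x (n + 1)) (x n)) atTop (𝓝 0) := hseq
  -- Step 1: the iterates form a 0-Cauchy sequence
  have key : ∀ ε > (0 : ℝ), ∃ N : ℕ, ∀ m n, N ≤ m → N ≤ n → p (x m) (x n) < ε := by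
    intro ε hε
    obtain ⟨ε₃, hε₃, H3⟩ := h3 (ε / 2) (by positivity)
    set ε₁ := min ε₃ (ε / 2) with hε₁d
    have hε₁ : 0 < ε₁ := lt_min hε₃ (by positivity)
    obtain ⟨δ, hδ, H1⟩ := h1c ε₁ hε₁
    have hδ' : (0 : ℝ) < min δ (ε / 2) := lt_min hδ (by positivity)
    obtain ⟨N, hN⟩ := eventually_atTop.1 (hseq'.eventually_lt_const hδ')
    have main : ∀ n, N ≤ n → ∀ m, n ≤ m → p (x m) (x n) < ε / 2 + ε₁ := by
      intro n hn
      refine Nat.le_induction ?_ ?_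
      · -- base case: p (x n) (x n) is small
        have h0 := H1 (x n) (x n) (x (n + 1))
          (lt_of_lt_of_le (hN n hn) (min_le_left _ _))
        have h2 := (abs_sub_lt_iff.1 h0).2
        have h4 : p (x (n + 1)) (x n) < min δ (ε / 2) := hN n hn
        have h5 : min δ (ε / 2) ≤ ε / 2 := min_le_right _ _
        linarith
      · intro m hm ih
        by_cases hc : p (x m) (x n) < ε / 2
        · have h0 := H1 (x n) (x m) (x (m + 1))
            (lt_of_lt_of_le (hN m (hn.trans hm)) (min_le_left _ _))
          have h2 := (abs_sub_lt_iff.1 h0).1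
          linarith
        · push_neg at hc
          have hle : ε₁ ≤ ε₃ := min_le_left _ _
          have h2 : p (x m) (x n) < ε / 2 + ε₃ := by linarith
          have hcontr : p (f (x m)) (f (x n)) ≤ ε / 2 := H3 (x n) (x m) hc h2
          have hd : p (x n) (x (n + 1)) < δ := by
            rw [h1b]
            exact lt_of_lt_of_le (hN n hn) (min_le_left _ _)
          have h0 := H1 (x (m + 1)) (x (n + 1)) (x n) hd
          have h4 := (abs_sub_lt_iff.1 h0).1
          have e1 : p (x (m + 1)) (x n) = p (x n) (x (m + 1)) := h1b _ _
          have e2 : p (x (n + 1)) (x (m + 1)) = p (f (x m)) (f (x n)) := by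
            rw [hxs, hxs, h1b]
          linarith
    refine ⟨N, fun m n hm hn => ?_⟩
    have hε₁le : ε₁ ≤ ε / 2 := min_le_right _ _
    rcases le_total n m with h | h
    · have := main n hn m h; linarith
    · have := main m hm n h
      rw [h1b]; linarith
  have cauchy : Tendsto (fun q : ℕ × ℕ => p (x q.1) (x q.2)) atTop (𝓝 0) := by
    rw [Metric.tendsto_nhds]
    intro ε hε
    obtain ⟨N, hN⟩ := key ε hε
    filter_upwards [eventually_ge_atTop ((N, N) : ℕ × ℕ)] with q hq
    rw [Real.dist_eq, sub_zero, abs_of_nonneg (hnonneg _ _)]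
    exact hN q.1 q.2 hq.1 hq.2
  obtain ⟨a, ha⟩ := hcomplete x cauchy
  -- Step 2: p a a = 0
  have paa : p a a = 0 := by
    refine le_antisymm (le_of_forall_pos_le_add fun ε hε => ?_) (hnonneg a a)
    obtain ⟨δ, hδ, H1⟩ := h1c (ε / 2) (by positivity)
    obtain ⟨n, hn1, hn2⟩ :=
      ((ha.eventually_lt_const hδ).and
        (ha.eventually_lt_const (show (0 : ℝ) < ε / 2 by positivity))).exists
    have h0 := H1 a a (x n) hn1
    have h2 := (abs_sub_lt_iff.1 h0).2
    linarith
  -- Step 3: f a = a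
  have hfa : p (f a) a = 0 := by
    by_cases hS : ∀ N : ℕ, ∃ n ≥ N, x n = a
    · refine le_antisymm (le_of_forall_pos_le_add fun ε hε => ?_) (hnonneg _ _)
      obtain ⟨N, hN⟩ := eventually_atTop.1 (hseq'.eventually_lt_const hε)
      obtain ⟨n, hn, hxa⟩ := hS N
      have hx1 : x (n + 1) = f a := by rw [hxs, hxa]
      have h := hN n hn
      rw [hx1, hxa] at h
      linarith
    · push_neg at hS
      obtain ⟨N, hN⟩ := hS
      have hpos : ∀ n, N ≤ n → 0 < p (x n) a := fun n hn =>
        lt_of_le_of_ne (hnonneg _ _) fun h => hN n hn (h1a _ _ h.symm)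
      have hcontr : ∀ n, N ≤ n → p (x (n + 1)) (f a) ≤ p (x n) a := by
        intro n hn
        obtain ⟨ε', hε', H⟩ := h3 (p (x n) a) (hpos n hn)
        have := H a (x n) le_rfl (lt_add_of_pos_right _ hε')
        rw [hxs]
        exact this
      refine le_antisymm (le_of_forall_pos_le_add fun ε hε => ?_) (hnonneg _ _)
      obtain ⟨δ, hδ, H1⟩ := h1c (ε / 2) (by positivity)
      have hmin : (0 : ℝ) < min δ (ε / 2) := lt_min hδ (by positivity)
      obtain ⟨M, hM⟩ := eventually_atTop.1 (ha.eventually_lt_const hmin)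
      set n := max N M with hnd
      have hnN : N ≤ n := le_max_left _ _
      have h1 : p (x n) a < δ :=
        lt_of_lt_of_le (hM n (le_max_right _ _)) (min_le_left _ _)
      have h2 : p (x (n + 1)) a < ε / 2 :=
        lt_of_lt_of_le (hM (n + 1) ((le_max_right _ _).trans (Nat.le_succ n)))
          (min_le_right _ _)
      have h3' : p (x (n + 1)) (f a) < δ := lt_of_le_of_lt (hcontr n hnN) h1
      have h0 := H1 a (f a) (x (n + 1)) h3'
      have h4 := (abs_sub_lt_iff.1 h0).2
      linarith
  exact ⟨a, ha, paa, (h1a _ _ hfa).symm ▸ rfl⟩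
end

section
/- Let $p$ be a felt metric for a nonempty set $X$ and let $f : X \to X$ be a selfmapping. Suppose that $f$ satisfies condition (2): for each $\alpha > 0$ there exists an $\epsilon > 0$ such that for all $x, y \in X$, $\alpha - \epsilon < p(y,x) < \alpha + \epsilon$ implies $p(fy,fx) \le \alpha$. Fix $x_0 \in X$, let $x_n = f^n x_0$ for all $n \in \mathbb{N}$, and assume $\lim_{n\to\infty} p(x_{n+1}, x_n) = 0$. If $(X,p)$ is $0$-complete, then there exists an $x \in X$ such that $\lim_{n\to\infty} p(x_n, x) = 0$, $p(x,x) = 0$, and $fx = x$. -/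
open Filter Topology

/-- For a felt metric `p` on a nonempty set `X` and a selfmap `f`
satisfying condition (2), if the iterates `x_n = f^[n] x_0` satisfy
`p (x_{n+1}, x_n) → 0` and `(X, p)` is `0`-complete, then there is `x ∈ X` with
`p (x_n, x) → 0`, `p x x = 0` and `f x = x`. -/
theorem felt_metric_fixed_point_cond2
    {X : Type*} [Nonempty X] (p : X → X → ℝ) (f : X → X)
    (hnonneg : ∀ x y : X, 0 ≤ p x y)
    (h1a : ∀ x y : X, p x y = 0 → x = y)
    (h1b : ∀ x y : X, p x y = p y x)
    (h1c : ∀ ε : ℝ, ε > 0 → ∃ δ : ℝ, δ > 0 ∧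
      ∀ x y z : X, p z y < δ → |p z x - p y x| < ε)
    (h2 : ∀ α : ℝ, α > 0 → ∃ ε : ℝ, ε > 0 ∧
      ∀ x y : X, α - ε < p y x → p y x < α + ε → p (f y) (f x) ≤ α)
    (x₀ : X)
    (hseq : Tendsto (fun n : ℕ => p (f^[n + 1] x₀) (f^[n] x₀)) atTop (𝓝 0))
    (hcomplete : ∀ u : ℕ → X,
      Tendsto (fun q : ℕ × ℕ => p (u q.1) (u q.2)) atTop (𝓝 0) →
      ∃ x : X, Tendsto (fun n : ℕ => p (u n) x) atTop (𝓝 0)) :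
    ∃ x : X, Tendsto (fun n : ℕ => p (f^[n] x₀) x) atTop (𝓝 0) ∧
      p x x = 0 ∧ f x = x := by
  classical
  set x : ℕ → X := fun n => f^[n] x₀ with hxdef
  have hstep : ∀ n, x (n + 1) = f (x n) := fun n => Function.iterate_succ_apply' f n x₀
  -- contraction when the distance is positive
  have key : ∀ y z : X, 0 < p y z → p (f y) (f z) ≤ p y z := by
    intro y z h
    obtain ⟨ε, hε, h'⟩ := h2 (p y z) h
    exact h' z y (by linarith) (by linarith)
  -- consecutive distances become small
  have hsmall : ∀ δ : ℝ, 0 < δ → ∃ N, ∀ n ≥ N, p (x (n + 1)) (x n) < δ := by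
    intro δ hδ
    obtain ⟨N, hN⟩ := (Metric.tendsto_atTop.mp hseq) δ hδ
    refine ⟨N, fun n hn => ?_⟩
    have := hN n hn
    rw [Real.dist_eq, sub_zero, abs_of_nonneg (hnonneg _ _)] at this
    exact this
  -- the orbit is 0-Cauchy
  have cauchyAux : ∀ γ : ℝ, 0 < γ → ∃ N, ∀ m n, N ≤ m → N ≤ n → p (x m) (x n) < γ := by
    intro γ hγ
    obtain ⟨ε₀, hε₀, hh2⟩ := h2 (γ / 2) (by linarith)
    set ε := min (ε₀ / 2) (γ / 4) with hεdef
    have hεpos : 0 < ε := lt_min (by linarith) (by linarith)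
    have hεε₀ : ε < ε₀ := lt_of_le_of_lt (min_le_left _ _) (by linarith)
    have hεγ : ε ≤ γ / 4 := min_le_right _ _
    obtain ⟨δ₀, hδ₀, hh1c⟩ := h1c ε hεpos
    set δ := min δ₀ ε with hδdef
    have hδpos : 0 < δ := lt_min hδ₀ hεpos
    have hδδ₀ : δ ≤ δ₀ := min_le_left _ _
    have hδε : δ ≤ ε := min_le_right _ _
    obtain ⟨N, hN⟩ := hsmall δ hδpos
    refine ⟨N, ?_⟩
    have main : ∀ n, N ≤ n → ∀ k, 1 ≤ k → p (x (n + k)) (x n) ≤ γ / 2 + ε := by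
      intro n hn k hk
      induction k with
      | zero => omega
      | succ k ih =>
        rcases Nat.lt_or_ge k 1 with h1 | h1
        · -- base case k = 0
          have hk0 : k = 0 := by omega
          subst hk0
          have := hN n hn
          have : p (x (n + 1)) (x n) < δ := this
          linarith
        · have ihk := ih h1
          show p (x (n + k + 1)) (x n) ≤ γ / 2 + ε
          by_cases hcase : γ / 2 - ε < p (x (n + k)) (x n)
          · -- in the window: apply condition (2)
            have hwin1 : γ / 2 - ε₀ < p (x (n + k)) (x n) := by linarith
            have hwin2 : p (x (n + k)) (x n) < γ / 2 + ε₀ := by linarith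
            have h2app : p (x (n + k + 1)) (x (n + 1)) ≤ γ / 2 := by
              have := hh2 (x n) (x (n + k)) hwin1 hwin2
              rw [hstep (n + k), hstep n]
              exact this
            have h1capp := hh1c (x (n + k + 1)) (x n) (x (n + 1))
              (lt_of_lt_of_le (hN n hn) hδδ₀)
            rw [abs_lt] at h1capp
            have s1 : p (x (n + k + 1)) (x n) = p (x n) (x (n + k + 1)) := h1b _ _
            have s2 : p (x (n + 1)) (x (n + k + 1)) = p (x (n + k + 1)) (x (n + 1)) := h1b _ _
            linarith [h1capp.1, h1capp.2]
          · -- below the window: one step of (1c)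
            push_neg at hcase
            have hNk : N ≤ n + k := by omega
            have h1capp := hh1c (x n) (x (n + k)) (x (n + k + 1))
              (lt_of_lt_of_le (hN (n + k) hNk) hδδ₀)
            rw [abs_lt] at h1capp
            linarith [h1capp.1, h1capp.2]
    intro m n hm hn
    rcases lt_trichotomy m n with h | h | h
    · obtain ⟨k, hk, rfl⟩ : ∃ k, 1 ≤ k ∧ n = m + k := ⟨n - m, by omega, by omega⟩
      have := main m hm k hk
      have hs : p (x m) (x (m + k)) = p (x (m + k)) (x m) := h1b _ _
      linarith
    · subst h
      have h1capp := hh1c (x m) (x m) (x (m + 1)) (lt_of_lt_of_le (hN m hm) hδδ₀)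
      rw [abs_lt] at h1capp
      have := hN m hm
      linarith [h1capp.1, h1capp.2]
    · obtain ⟨k, hk, rfl⟩ : ∃ k, 1 ≤ k ∧ m = n + k := ⟨m - n, by omega, by omega⟩
      have := main n hn k hk
      linarith
  have cauchy : Tendsto (fun q : ℕ × ℕ => p (x q.1) (x q.2)) atTop (𝓝 0) := by
    rw [Metric.tendsto_nhds]
    intro γ hγ
    obtain ⟨N, hN⟩ := cauchyAux γ hγ
    rw [eventually_atTop]
    refine ⟨(N, N), fun q hq => ?_⟩
    rw [Real.dist_eq, sub_zero, abs_of_nonneg (hnonneg _ _)]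
    exact hN q.1 q.2 hq.1 hq.2
  obtain ⟨z, hz⟩ := hcomplete x cauchy
  have hz' : Tendsto (fun n => p (x (n + 1)) z) atTop (𝓝 0) :=
    hz.comp (tendsto_add_atTop_nat 1)
  -- p z z = 0
  have hpz : p z z = 0 := by
    have hb : ∀ ε : ℝ, 0 < ε → p z z < ε := by
      intro ε hε
      obtain ⟨δ, hδpos, hδ⟩ := h1c (ε / 2) (by linarith)
      have e1 := Tendsto.eventually_lt_const hδpos hz
      have e2 := Tendsto.eventually_lt_const (half_pos hε) hz
      obtain ⟨n, h1', h2'⟩ := (e1.and e2).exists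
      have := hδ z z (x n) h1'
      rw [abs_lt] at this
      linarith [this.1, this.2]
    rcases eq_or_lt_of_le (hnonneg z z) with h | h
    · exact h.symm
    · exact absurd (hb _ h) (lt_irrefl _)
  -- f z = z
  have hfz : p (f z) z = 0 := by
    by_cases hfreq : ∃ᶠ n in atTop, x n = z
    · -- the orbit hits z infinitely often
      rcases eq_or_lt_of_le (hnonneg (f z) z) with h | h
      · exact h.symm
      · obtain ⟨N, hN⟩ := hsmall (p (f z) z) h
        obtain ⟨n, hxn, hn⟩ := (hfreq.and_eventually (eventually_ge_atTop N)).exists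
        have := hN n hn
        rw [hstep n, hxn] at this
        exact absurd this (lt_irrefl _)
    · rw [not_frequently] at hfreq
      have hev : ∀ᶠ n in atTop, 0 < p (x n) z :=
        hfreq.mono fun n hn =>
          lt_of_le_of_ne (hnonneg _ _) fun h => hn (h1a _ _ h.symm)
      have hle : ∀ᶠ n in atTop, p (x (n + 1)) (f z) ≤ p (x n) z :=
        hev.mono fun n hn => by rw [hstep n]; exact key _ _ hn
      have hto : Tendsto (fun n => p (x (n + 1)) (f z)) atTop (𝓝 0) :=
        squeeze_zero' (Eventually.of_forall fun n => hnonneg _ _) hle hz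
      have hb : ∀ ε : ℝ, 0 < ε → p (f z) z < ε := by
        intro ε hε
        obtain ⟨δ, hδpos, hδ⟩ := h1c (ε / 2) (by linarith)
        have e1 := Tendsto.eventually_lt_const hδpos hto
        have e2 := Tendsto.eventually_lt_const (half_pos hε) hz'
        obtain ⟨n, h1', h2'⟩ := (e1.and e2).exists
        have := hδ z (f z) (x (n + 1)) h1'
        rw [abs_lt] at this
        linarith [this.1, this.2]
      rcases eq_or_lt_of_le (hnonneg (f z) z) with h | h
      · exact h.symm
      · exact absurd (hb _ h) (lt_irrefl _)
  exact ⟨z, hz, hpz, h1a _ _ hfz⟩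
end

section
/- Let $X$ be a set, $p : X \times X \to [0,\infty)$ a mapping, and $f : X \to X$ a selfmapping. Then the following two conditions are equivalent: condition (2): for each $\alpha > 0$ there exists an $\epsilon > 0$ such that for all $x, y \in X$, $\alpha - \epsilon < p(y,x) < \alpha + \epsilon$ implies $p(fy,fx) \le \alpha$; and condition (3): for each $\alpha > 0$ there exists an $\epsilon > 0$ such that for all $x, y \in X$, $\alpha \le p(y,x) < \alpha + \epsilon$ implies $p(fy,fx) \le \alpha$. -/
/-- Conditions (2) and (3) are equivalent for an arbitrary
nonnegative mapping `p : X × X → [0,∞)` and selfmapping `f`. -/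
theorem cond2_iff_cond3
    {X : Type*} (p : X → X → ℝ) (f : X → X)
    (hnonneg : ∀ x y : X, 0 ≤ p x y) :
    (∀ α : ℝ, α > 0 → ∃ ε : ℝ, ε > 0 ∧
      ∀ x y : X, α - ε < p y x → p y x < α + ε → p (f y) (f x) ≤ α) ↔
    (∀ α : ℝ, α > 0 → ∃ ε : ℝ, ε > 0 ∧
      ∀ x y : X, α ≤ p y x → p y x < α + ε → p (f y) (f x) ≤ α) := by
  constructor
  · intro h2 α hα
    obtain ⟨ε, hε, H⟩ := h2 α hα
    exact ⟨ε, hε, fun x y h1 h2' => H x y (by linarith) h2'⟩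
  · intro h3 α hα
    obtain ⟨ε₁, hε₁, H₁⟩ := h3 α hα
    refine ⟨min ε₁ α, lt_min hε₁ hα, fun x y hlo hhi => ?_⟩
    rcases le_or_gt α (p y x) with hge | hlt
    · exact H₁ x y hge (lt_of_lt_of_le hhi (by simp [min_le_left]))
    · have hv : 0 < p y x := by
        have : α - min ε₁ α ≥ 0 := by simp
        linarith
      obtain ⟨ε₂, hε₂, H₂⟩ := h3 (p y x) hv
      have := H₂ x y le_rfl (by linarith)
      linarith
end

section
/- Let $p$ be a felt metric for a nonempty set $X$ and let $f : X \to X$ be a selfmapping satisfying condition (3): for each $\alpha > 0$ there exists an $\epsilon > 0$ such that for all $x, y \in X$, $\alpha \le p(y,x) < \alpha + \epsilon$ implies $p(fy,fx) \le \alpha$. Fix $x_0 \in X$, let $x_n = f^n x_0$ for all $n \in \mathbb{N}$, and suppose $x \in X$ is such that $\lim_{n\to\infty} p(x_n, x) = 0$ and $p(x,x) = 0$. Then $fx = x$. -/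
open Filter Topology

/-- For a felt metric `p` on a nonempty set `X` and a selfmap `f`
satisfying condition (3), if `x_n = f^[n] x₀` satisfies `p (x_n, x) → 0` and
`p x x = 0`, then `x` is a fixed point of `f`. -/
theorem felt_metric_limit_is_fixed_point
    {X : Type*} [Nonempty X] (p : X → X → ℝ) (f : X → X)
    (hnonneg : ∀ x y : X, 0 ≤ p x y)
    (h1a : ∀ x y : X, p x y = 0 → x = y)
    (h1b : ∀ x y : X, p x y = p y x)
    (h1c : ∀ ε : ℝ, ε > 0 → ∃ δ : ℝ, δ > 0 ∧
      ∀ x y z : X, p z y < δ → |p z x - p y x| < ε)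
    (h3 : ∀ α : ℝ, α > 0 → ∃ ε : ℝ, ε > 0 ∧
      ∀ x y : X, α ≤ p y x → p y x < α + ε → p (f y) (f x) ≤ α)
    (x₀ : X) (x : X)
    (hlim : Tendsto (fun n : ℕ => p (f^[n] x₀) x) atTop (𝓝 0))
    (hxx : p x x = 0) :
    f x = x := by
  -- contractivity on distinct points
  have hcontr : ∀ y z : X, 0 < p y z → p (f y) (f z) ≤ p y z := by
    intro y z hpos
    obtain ⟨ε, hε, hεp⟩ := h3 (p y z) hpos
    exact hεp z y le_rfl (by linarith)
  by_cases hev : ∃ N, f^[N] x₀ = x ∧ f^[N + 1] x₀ = x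
  · obtain ⟨N, hN, hN1⟩ := hev
    calc f x = f (f^[N] x₀) := by rw [hN]
    _ = f^[N + 1] x₀ := (Function.iterate_succ_apply' f N x₀).symm
    _ = x := hN1
  · -- frequently x_n ≠ x
    have hfreq : ∀ N : ℕ, ∃ n ≥ N, f^[n] x₀ ≠ x := by
      intro N
      by_contra h
      push_neg at h
      exact hev ⟨N, h N le_rfl, h (N + 1) (Nat.le_succ N)⟩
    have hlim' : ∀ δ : ℝ, 0 < δ → ∃ N, ∀ n ≥ N, p (f^[n] x₀) x < δ := by
      intro δ hδ
      have := (Metric.tendsto_atTop.mp hlim) δ hδ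
      obtain ⟨N, hN⟩ := this
      refine ⟨N, fun n hn => ?_⟩
      have := hN n hn
      rw [Real.dist_eq, sub_zero] at this
      exact lt_of_abs_lt this
    -- p (x_{n+1}) (f x) → p x (f x)
    have hA : Tendsto (fun n : ℕ => p (f^[n + 1] x₀) (f x)) atTop (𝓝 (p x (f x))) := by
      rw [Metric.tendsto_atTop]
      intro ε hε
      obtain ⟨δ, hδ, hδp⟩ := h1c ε hε
      obtain ⟨N, hN⟩ := hlim' δ hδ
      refine ⟨N, fun n hn => ?_⟩
      rw [Real.dist_eq]
      exact hδp (f x) x (f^[n + 1] x₀) (hN (n + 1) (le_trans hn (Nat.le_succ n)))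
    have hA0 : p x (f x) = 0 := by
      by_contra hne
      have hApos : 0 < p x (f x) := lt_of_le_of_ne (hnonneg x (f x)) (Ne.symm hne)
      obtain ⟨N1, hN1⟩ := (Metric.tendsto_atTop.mp hA) (p x (f x) / 2) (by linarith)
      obtain ⟨N2, hN2⟩ := hlim' (p x (f x) / 2) (by linarith)
      obtain ⟨n, hn, hnx⟩ := hfreq (max N1 N2)
      have h1 : p (f^[n] x₀) x > 0 := by
        rcases lt_or_eq_of_le (hnonneg (f^[n] x₀) x) with h | h
        · exact h
        · exact absurd (h1a _ _ h.symm) hnx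
      have h2 : p (f^[n + 1] x₀) (f x) ≤ p (f^[n] x₀) x := by
        rw [Function.iterate_succ_apply']
        exact hcontr _ _ h1
      have h3' := hN1 n (le_trans (le_max_left N1 N2) hn)
      rw [Real.dist_eq] at h3'
      have h3'' : p (f^[n + 1] x₀) (f x) > p x (f x) / 2 := by
        have := abs_lt.mp h3'
        linarith [this.1]
      have h4 := hN2 n (le_trans (le_max_right N1 N2) hn)
      linarith
    exact (h1a x (f x) hA0).symm
end
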